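/- arXiv:1804.00037 — 3 statements merged into one kernel-verified Lean document; each statement's English description precedes it below -/
import Mathlib

section
/- Every non-blocking reactive supervisor S for an open discrete event system P satisfies that the prefix-closure of the marked input-output language of the supervised plant equals its input-output language: closure(L_{io,m}(S/P)) = L_{io}(S/P). -/
/-- Letterwise projection of an extended word to its input-internal component. -/
def Pxp {Sx Sp Sy : Type} (w : List (Sx × Sp × Sy)) : List (Sx × Sp) :=
  w.map fun t => (t.1, t.2.1)

/-- Letterwise projection of an extended word to its input component. -/
def Px {Sx Sp Sy : Type} (w : List (Sx × Sp × Sy)) : List Sx :=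
  w.map fun t => t.1

/-- Letterwise projection of an extended word to its output component. -/
def Py {Sx Sp Sy : Type} (w : List (Sx × Sp × Sy)) : List Sy :=
  w.map fun t => t.2.2

/-- Letterwise projection of an extended word to its input-output component. -/
def Pxy {Sx Sp Sy : Type} (w : List (Sx × Sp × Sy)) : List (Sx × Sy) :=
  w.map fun t => (t.1, t.2.2)

/-- Prefix-closure of a language. -/
def prefCl {α : Type} (L : Set (List α)) : Set (List α) :=
  {u | ∃ w ∈ L, u <+: w}

/-- An open discrete event system: states, partial transition function
`delta : Q → Sx → Sp → Option Q`, deterministic output function `gamma`,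
initial state `q0`, and marked states `Qm`. -/
structure OpenDES (Q Sp Sx Sy : Type) where
  q0 : Q
  delta : Q → Sx → Sp → Option Q
  gamma : Q → Sp → Sy
  Qm : Set Q

namespace OpenDES

variable {Q Sp Sx Sy : Type}

/-- Input-enabledness: every state accepts every input with some internal event. -/
def InputEnabled (P : OpenDES Q Sp Sx Sy) : Prop :=
  ∀ q x, ∃ σ, (P.delta q x σ).isSome

/-- The transition function extended to input-internal words (partial). -/
def run (P : OpenDES Q Sp Sx Sy) : Q → List (Sx × Sp) → Option Q
  | q, [] => some q
  | q, (x, σ) :: w =>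
      match P.delta q x σ with
      | some q' => P.run q' w
      | none => none

/-- The extended input-output language `L_e(P)`, defined recursively. -/
inductive Le (P : OpenDES Q Sp Sx Sy) : List (Sx × Sp × Sy) → Prop
  | nil : Le P []
  | snoc {w : List (Sx × Sp × Sy)} {x : Sx} {σ : Sp} {y : Sy} {q : Q} :
      Le P w →
      P.run P.q0 (Pxp w) = some q →
      (P.delta q x σ).isSome →
      y = P.gamma q σ →
      Le P (w ++ [(x, σ, y)])

/-- `L_e(P)` as a set. -/
def LeSet (P : OpenDES Q Sp Sx Sy) : Set (List (Sx × Sp × Sy)) := {w | P.Le w}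

/-- The marked extended input-output language `L_{e,m}(P)`. -/
def Lem (P : OpenDES Q Sp Sx Sy) : Set (List (Sx × Sp × Sy)) :=
  {w | P.Le w ∧ ∃ q, P.run P.q0 (Pxp w) = some q ∧ q ∈ P.Qm}

/-- The input-output language `L_{io}(P)`. -/
def Lio (P : OpenDES Q Sp Sx Sy) : Set (List (Sx × Sy)) := Pxy '' P.LeSet

/-- The marked input-output language `L_{io,m}(P)`. -/
def Liom (P : OpenDES Q Sp Sx Sy) : Set (List (Sx × Sy)) := Pxy '' P.Lem

/-- The supervised extended language `L_e(S/P)` for a supervisor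
`S : (Sx × Sp)* → 2^{Sp}`. -/
inductive SupLe (P : OpenDES Q Sp Sx Sy) (S : List (Sx × Sp) → Set Sp) :
    List (Sx × Sp × Sy) → Prop
  | nil : SupLe P S []
  | snoc {w : List (Sx × Sp × Sy)} {x : Sx} {σ : Sp} {y : Sy} :
      SupLe P S w →
      P.Le (w ++ [(x, σ, y)]) →
      σ ∈ S (Pxp w) →
      SupLe P S (w ++ [(x, σ, y)])

/-- `L_e(S/P)` as a set. -/
def SupLeSet (P : OpenDES Q Sp Sx Sy) (S : List (Sx × Sp) → Set Sp) :
    Set (List (Sx × Sp × Sy)) := {w | SupLe P S w}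

/-- The supervised input-output language `L_{io}(S/P)`. -/
def SupLio (P : OpenDES Q Sp Sx Sy) (S : List (Sx × Sp) → Set Sp) :
    Set (List (Sx × Sy)) := Pxy '' P.SupLeSet S

/-- The supervised marked input-output language `L_{io,m}(S/P)`. -/
def SupLiom (P : OpenDES Q Sp Sx Sy) (S : List (Sx × Sp) → Set Sp) :
    Set (List (Sx × Sy)) := P.SupLio S ∩ P.Liom

/-- A supervisor is non-blocking if the prefix-closure of
`P_xp(L_e(S/P) ∩ L_{e,m}(P))` equals `P_xp(L_e(S/P))`. -/
def Nonblocking (P : OpenDES Q Sp Sx Sy) (S : List (Sx × Sp) → Set Sp) : Prop :=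
  prefCl (Pxp '' (P.SupLeSet S ∩ P.Lem)) = Pxp '' P.SupLeSet S

/-- The uncontrollable input-output event set `Σ^{io}_u`. -/
def SigmaIOu (P : OpenDES Q Sp Sx Sy) (Suc : Set Sp) : Set (Sx × Sy) :=
  {xy | ∃ q σu, σu ∈ Suc ∧ (P.delta q xy.1 σu).isSome ∧ xy.2 = P.gamma q σu}

/-- Output controllability: `K̄·Σ^{io}_u ∩ L_{io}(P) ⊆ K̄`. -/
def OutputControllable (P : OpenDES Q Sp Sx Sy) (Suc : Set Sp)
    (K : Set (List (Sx × Sy))) : Prop :=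
  ∀ w ∈ prefCl K, ∀ xy ∈ P.SigmaIOu Suc, w ++ [xy] ∈ P.Lio → w ++ [xy] ∈ prefCl K

end OpenDES

/-! The output of a transition is a function of the current state and the internal event, so a
word of `L_e(P)` is determined by its input-internal projection. Hence non-blocking, which is
stated on `P_xp`-projections, lifts to the extended language: every word of `L_e(S/P)` is a prefix
of a marked one. Letterwise projection commutes with prefix-closure, and projecting to
input-output pairs gives the claim. -/

section PrefixClosure

variable {α β : Type}

theorem subset_prefCl (L : Set (List α)) : L ⊆ prefCl L :=
  fun w hw => ⟨w, hw, List.prefix_refl w⟩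

theorem prefCl_mono {L M : Set (List α)} (h : L ⊆ M) : prefCl L ⊆ prefCl M :=
  fun _ ⟨w, hw, hp⟩ => ⟨w, h hw, hp⟩

theorem prefCl_eq_self {L : Set (List α)} (h : ∀ w ∈ L, ∀ u, u <+: w → u ∈ L) :
    prefCl L = L :=
  Set.Subset.antisymm (fun _ ⟨w, hw, hp⟩ => h w hw _ hp) (subset_prefCl L)

theorem prefCl_image_map (f : α → β) (L : Set (List α)) :
    prefCl (List.map f '' L) = List.map f '' prefCl L := by
  ext u
  constructor
  · rintro ⟨_, ⟨w, hw, rfl⟩, hp⟩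
    obtain ⟨v, hv, rfl⟩ := List.prefix_map_iff.mp hp
    exact ⟨v, ⟨w, hw, hv⟩, rfl⟩
  · rintro ⟨v, ⟨w, hw, hv⟩, rfl⟩
    exact ⟨w.map f, ⟨w, hw, rfl⟩, hv.map f⟩

end PrefixClosure

namespace OpenDES

variable {Q Sp Sx Sy : Type} {P : OpenDES Q Sp Sx Sy} {S : List (Sx × Sp) → Set Sp}
  {u w : List (Sx × Sp × Sy)}

theorem Le.of_prefix (h : P.Le w) (hp : u <+: w) : P.Le u := by
  induction h generalizing u with
  | nil => rw [List.prefix_nil.mp hp]; exact Le.nil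
  | snoc hw hrun hdel hy ih =>
    rcases List.prefix_concat_iff.mp hp with rfl | hp
    · exact Le.snoc hw hrun hdel hy
    · exact ih hp

theorem SupLe.of_prefix (h : P.SupLe S w) (hp : u <+: w) : P.SupLe S u := by
  induction h generalizing u with
  | nil => rw [List.prefix_nil.mp hp]; exact SupLe.nil
  | snoc hw hle hctrl ih =>
    rcases List.prefix_concat_iff.mp hp with rfl | hp
    · exact SupLe.snoc hw hle hctrl
    · exact ih hp

theorem SupLe.le (h : P.SupLe S w) : P.Le w := by
  cases h with
  | nil => exact Le.nil
  | snoc _ hle _ => exact hle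

theorem Le.eq_of_pxp_eq {v : List (Sx × Sp × Sy)} (hw : P.Le w) (hv : P.Le v)
    (h : Pxp w = Pxp v) : w = v := by
  induction hw generalizing v with
  | nil => exact (List.map_eq_nil_iff.mp h.symm).symm
  | snoc hw hrun _ hy ih =>
    cases hv with
    | nil => simp [Pxp] at h
    | snoc hv hrun' _ hy' =>
      simp only [Pxp, List.map_append, List.map_cons, List.map_nil] at h
      obtain ⟨hpre, hlast⟩ := List.append_inj' h rfl
      obtain ⟨rfl, rfl⟩ := Prod.mk.inj (List.singleton_inj.mp hlast)
      obtain rfl := ih hv hpre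
      obtain rfl := Option.some_inj.mp (hrun.symm.trans hrun')
      rw [hy, hy']

theorem prefCl_supLeSet : prefCl (P.SupLeSet S) = P.SupLeSet S :=
  prefCl_eq_self fun _ hw _ hp => SupLe.of_prefix hw hp

theorem Nonblocking.prefCl_supLeSet_inter_lem (hNB : P.Nonblocking S) :
    prefCl (P.SupLeSet S ∩ P.Lem) = P.SupLeSet S := by
  refine Set.Subset.antisymm ?_ fun w hw => ?_
  · exact (prefCl_mono Set.inter_subset_left).trans prefCl_supLeSet.subset
  obtain ⟨u, ⟨v, hv, hu⟩, hwu⟩ : Pxp w ∈ Pxp '' prefCl (P.SupLeSet S ∩ P.Lem) :=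
    (prefCl_image_map _ _).subset (hNB ▸ ⟨w, hw, rfl⟩)
  obtain rfl := Le.eq_of_pxp_eq hw.le (hv.2.1.of_prefix hu) hwu.symm
  exact ⟨v, hv, hu⟩

theorem prefCl_supLio : prefCl (P.SupLio S) = P.SupLio S :=
  (prefCl_image_map _ _).trans (congrArg _ prefCl_supLeSet)

end OpenDES

theorem nonblocking_supervisor_io_closure_general
    {Q Sp Sx Sy : Type} (P : OpenDES Q Sp Sx Sy)
    (S : List (Sx × Sp) → Set Sp)
    (hNB : P.Nonblocking S) :
    prefCl (P.SupLiom S) = P.SupLio S := by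
  refine Set.Subset.antisymm ?_ ?_
  · exact (prefCl_mono Set.inter_subset_left).trans OpenDES.prefCl_supLio.subset
  · calc P.SupLio S = Pxy '' prefCl (P.SupLeSet S ∩ P.Lem) := by
          rw [hNB.prefCl_supLeSet_inter_lem]; rfl
      _ = prefCl (Pxy '' (P.SupLeSet S ∩ P.Lem)) := (prefCl_image_map _ _).symm
      _ ⊆ prefCl (P.SupLiom S) := prefCl_mono (Set.image_inter_subset _ _ _)

/-- Every non-blocking reactive supervisor `S` (mapping into
control patterns, i.e. sets of internal events containing the uncontrollable
events `Suc`) satisfies `closure(L_{io,m}(S/P)) = L_{io}(S/P)`. -/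
theorem nonblocking_supervisor_io_closure
    {Q Sp Sx Sy : Type} (P : OpenDES Q Sp Sx Sy) (Suc : Set Sp)
    (S : List (Sx × Sp) → Set Sp) (hS : ∀ w, Suc ⊆ S w)
    (hNB : P.Nonblocking S) :
    prefCl (P.SupLiom S) = P.SupLio S :=
  nonblocking_supervisor_io_closure_general P S hNB
end

section
/- Let P be an open discrete event system and A_K the completed automaton (with sink q_⊥) of an input-complete Mealy transducer realizing a specification K ⊆ L_{io,m}(P). For the synchronous composition P ∥ A_K, the input-internal projection of the extended language is preserved: P_xp(L_e(P ∥ A_K)) = P_xp(L_e(P)). -/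
/-- A deterministic Mealy transducer with partial transition function. -/
structure Mealy (Qk Sx Sy : Type) where
  q0 : Qk
  delta : Qk → Sx → Option Qk
  gamma : Qk → Sx → Sy
  Qm : Set Qk

namespace Mealy

variable {Qk Sx Sy : Type}

/-- Input-completeness of a Mealy transducer. -/
def InputComplete (M : Mealy Qk Sx Sy) : Prop := ∀ q x, (M.delta q x).isSome

/-- `Path M q w q'` : the run of `M` from `q` reading the inputs of the
input-output word `w` ends at `q'` and produces exactly the outputs of `w`. -/
inductive Path (M : Mealy Qk Sx Sy) : Qk → List (Sx × Sy) → Qk → Prop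
  | nil (q : Qk) : Path M q [] q
  | cons {q q' q'' : Qk} {x : Sx} {y : Sy} {w : List (Sx × Sy)} :
      M.delta q x = some q' → y = M.gamma q x → Path M q' w q'' →
      Path M q ((x, y) :: w) q''

/-- The (input-output) language of `M`. -/
def Lang (M : Mealy Qk Sx Sy) : Set (List (Sx × Sy)) :=
  {w | ∃ qf, M.Path M.q0 w qf}

/-- The marked (input-output) language of `M`. -/
def LangM (M : Mealy Qk Sx Sy) : Set (List (Sx × Sy)) :=
  {w | ∃ qf, M.Path M.q0 w qf ∧ qf ∈ M.Qm}

/-- One step of the completed automaton `A_K`: states are `Option Qk` where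
`none` is the dummy sink state `q_⊥`. -/
def akStep [DecidableEq Sy] (M : Mealy Qk Sx Sy) (s : Option Qk) (xy : Sx × Sy) :
    Option Qk :=
  s.bind fun q => (M.delta q xy.1).bind fun q' =>
    if xy.2 = M.gamma q xy.1 then some q' else none

/-- The run of the completed automaton `A_K` on a word over `Sx × Sy`. -/
def akRun [DecidableEq Sy] (M : Mealy Qk Sx Sy) (s : Option Qk)
    (w : List (Sx × Sy)) : Option Qk :=
  w.foldl (M.akStep) s

end Mealy

/-- The synchronous composition `P ∥ A_K`, itself an open DES with state set
`Q × Option Qk` (the `A_K`-component `none` being the sink `q_⊥`). -/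
def OpenDES.sync {Q Sp Sx Sy Qk : Type} [DecidableEq Sy]
    (P : OpenDES Q Sp Sx Sy) (M : Mealy Qk Sx Sy) :
    OpenDES (Q × Option Qk) Sp Sx Sy where
  q0 := (P.q0, some M.q0)
  delta := fun s x σ =>
    (P.delta s.1 x σ).map fun qp' => (qp', M.akStep s.2 (x, P.gamma s.1 σ))
  gamma := fun s σ => P.gamma s.1 σ
  Qm := {s | s.1 ∈ P.Qm ∧ ∃ qk ∈ M.Qm, s.2 = some qk}

/-- The behavior set `C_K(G)` of the three-player game: extended words generated
through `P ∥ A_K` under some control pattern (a set of internal events containing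
all uncontrollable events `Suc`) that never enter a state whose `A_K`-component
is the sink `q_⊥`. -/
inductive CK {Q Sp Sx Sy Qk : Type} [DecidableEq Sy]
    (P : OpenDES Q Sp Sx Sy) (M : Mealy Qk Sx Sy) (Suc : Set Sp) :
    List (Sx × Sp × Sy) → Prop
  | nil : CK P M Suc []
  | snoc {w : List (Sx × Sp × Sy)} {x : Sx} {σ : Sp} {y : Sy}
      {qp : Q} {qk : Qk} {qp' : Q} :
      CK P M Suc w →
      (P.sync M).run (P.sync M).q0 (Pxp w) = some (qp, some qk) →
      (∃ θ : Set Sp, Suc ⊆ θ ∧ σ ∈ θ) →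
      P.delta qp x σ = some qp' →
      (M.akStep (some qk) (x, P.gamma qp σ)).isSome →
      y = P.gamma qp σ →
      CK P M Suc (w ++ [(x, σ, y)])

/-- `K` is `SP`-realizable: `C_K(G)` is nonempty and every word of `C_K(G)`
extends within `C_K(G)` to a word whose input-output projection lies in `K`. -/
def SPRealizable {Q Sp Sx Sy Qk : Type} [DecidableEq Sy]
    (P : OpenDES Q Sp Sx Sy) (M : Mealy Qk Sx Sy) (Suc : Set Sp)
    (K : Set (List (Sx × Sy))) : Prop :=
  {w | CK P M Suc w}.Nonempty ∧
  ∀ w, CK P M Suc w → ∃ w', CK P M Suc w' ∧ w <+: w' ∧ Pxy w' ∈ K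

/-!
Thanks to the sink state `q_⊥`, the completed automaton `A_K` accepts every letter, so a
transition of `P ∥ A_K` exists exactly when the underlying transition of `P` does, with the same
output. Forgetting the `A_K`-component therefore maps the runs of `P ∥ A_K` onto the runs of `P`,
preserving outputs, so the two extended languages coincide even before projecting.
-/

namespace OpenDES

variable {Q Q' Sp Sx Sy : Type} (P : OpenDES Q Sp Sx Sy) (P' : OpenDES Q' Sp Sx Sy)
  {f : Q' → Q}

theorem run_map_of_delta_map (hdelta : ∀ q x σ, (P'.delta q x σ).map f = P.delta (f q) x σ) :
    ∀ (u : List (Sx × Sp)) (q : Q'), (P'.run q u).map f = P.run (f q) u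
  | [], _ => rfl
  | (x, σ) :: u, q => by
    have hstep := hdelta q x σ
    cases h : P'.delta q x σ with
    | none =>
      rw [h, Option.map_none] at hstep
      simp only [run, h, ← hstep, Option.map_none]
    | some q' =>
      rw [h, Option.map_some] at hstep
      simp only [run, h, ← hstep]
      exact run_map_of_delta_map hdelta u q'

theorem le_iff_of_delta_map (hdelta : ∀ q x σ, (P'.delta q x σ).map f = P.delta (f q) x σ)
    (h0 : f P'.q0 = P.q0)
    (hgamma : ∀ q σ, P'.gamma q σ = P.gamma (f q) σ) (w : List (Sx × Sp × Sy)) :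
    P'.Le w ↔ P.Le w := by
  have hrun u : (P'.run P'.q0 u).map f = P.run P.q0 u := by
    rw [← h0]; exact run_map_of_delta_map P P' hdelta u P'.q0
  constructor
  · intro hw
    induction hw with
    | nil => exact .nil
    | @snoc w x σ y q _ hq hdef hy ih =>
      refine .snoc ih (by rw [← hrun, hq, Option.map_some]) ?_ (hy.trans (hgamma q σ))
      rwa [← hdelta, Option.isSome_map]
  · intro hw
    induction hw with
    | nil => exact .nil
    | @snoc w x σ y q _ hq hdef hy ih =>
      obtain ⟨q', hq', rfl⟩ := Option.map_eq_some_iff.mp ((hrun _).trans hq)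
      refine .snoc ih hq' ?_ (hy.trans (hgamma q' σ).symm)
      rwa [← Option.isSome_map (f := f), hdelta]

end OpenDES

theorem OpenDES.leSet_sync {Q Sp Sx Sy Qk : Type} [DecidableEq Sy]
    (P : OpenDES Q Sp Sx Sy) (M : Mealy Qk Sx Sy) : (P.sync M).LeSet = P.LeSet := by
  ext w
  refine le_iff_of_delta_map P (P.sync M) (f := Prod.fst) ?_ rfl (fun _ _ => rfl) w
  intro s x σ
  simp [sync, Option.map_map, Function.comp_def]

theorem sync_preserves_xp_projection_general
    {Q Sp Sx Sy Qk : Type} [DecidableEq Sy]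
    (P : OpenDES Q Sp Sx Sy)
    (M : Mealy Qk Sx Sy) :
    Pxp '' (P.sync M).LeSet = Pxp '' P.LeSet := by
  rw [P.leSet_sync M]

/-- For the synchronous composition `P ∥ A_K` of an open DES `P`
with the completed automaton `A_K` of an input-complete Mealy transducer
realizing `K ⊆ L_{io,m}(P)`, the input-internal projection of the extended
language is preserved: `P_xp(L_e(P ∥ A_K)) = P_xp(L_e(P))`. -/
theorem sync_preserves_xp_projection
    {Q Sp Sx Sy Qk : Type} [DecidableEq Sy]
    (P : OpenDES Q Sp Sx Sy) (hP : P.InputEnabled)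
    (M : Mealy Qk Sx Sy) (hM : M.InputComplete)
    (K : Set (List (Sx × Sy))) (hMK : M.LangM = K) (hKsub : K ⊆ P.Liom) :
    Pxp '' (P.sync M).LeSet = Pxp '' P.LeSet :=
  sync_preserves_xp_projection_general P M
end

section
/- Let P be an open discrete event system and A_K the completed automaton (with sink q_⊥) of an input-complete Mealy transducer realizing a specification K ⊆ L_{io,m}(P). Then the marked input-output language of the synchronous composition equals the specification: L_{io,m}(P ∥ A_K) = K. -/
/-! The first component of `P ∥ A_K` moves exactly as `P` does, so both have the same extended
language. Along such a word the second component is the run of `A_K` on its input-output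
projection, which avoids the sink and ends in `Q_{km}` iff that projection lies in
`L_m(T_K) = K`. Hence `L_{io,m}(P ∥ A_K) = L_{io,m}(P) ∩ K = K`. -/

theorem Pxp_snoc {Sx Sp Sy : Type} (w : List (Sx × Sp × Sy)) (x : Sx) (σ : Sp) (y : Sy) :
    Pxp (w ++ [(x, σ, y)]) = Pxp w ++ [(x, σ)] := by
  simp [Pxp]

theorem Pxy_snoc {Sx Sp Sy : Type} (w : List (Sx × Sp × Sy)) (x : Sx) (σ : Sp) (y : Sy) :
    Pxy (w ++ [(x, σ, y)]) = Pxy w ++ [(x, y)] := by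
  simp [Pxy]

namespace Mealy

variable {Qk Sx Sy : Type} (M : Mealy Qk Sx Sy)

theorem path_nil_iff {q q' : Qk} : M.Path q [] q' ↔ q = q' := by
  constructor
  · rintro ⟨⟩
    rfl
  · rintro rfl
    exact .nil q

theorem path_cons_iff {q q'' : Qk} {x : Sx} {y : Sy} {w : List (Sx × Sy)} :
    M.Path q ((x, y) :: w) q'' ↔
      ∃ q', M.delta q x = some q' ∧ y = M.gamma q x ∧ M.Path q' w q'' := by
  constructor
  · rintro (_ | ⟨hd, hy, hp⟩)
    exact ⟨_, hd, hy, hp⟩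
  · rintro ⟨q', hd, hy, hp⟩
    exact .cons hd hy hp

variable [DecidableEq Sy]

theorem akRun_none (v : List (Sx × Sy)) : M.akRun none v = none := by
  induction v with
  | nil => rfl
  | cons _ v ih => exact ih

theorem akRun_eq_some_iff {q q' : Qk} {v : List (Sx × Sy)} :
    M.akRun (some q) v = some q' ↔ M.Path q v q' := by
  induction v generalizing q with
  | nil => simp [akRun, path_nil_iff]
  | cons a v ih =>
    obtain ⟨x, y⟩ := a
    rw [path_cons_iff]
    change M.akRun (M.akStep (some q) (x, y)) v = some q' ↔ _
    simp only [akStep, Option.bind_some]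
    cases M.delta q x with
    | none => simp [akRun_none]
    | some q1 => by_cases hy : y = M.gamma q x <;> simp [hy, ih, akRun_none]

end Mealy

namespace OpenDES

variable {Q Sp Sx Sy Qk : Type}

theorem run_append (P : OpenDES Q Sp Sx Sy) (q : Q) (u v : List (Sx × Sp)) :
    P.run q (u ++ v) = (P.run q u).bind fun q' => P.run q' v := by
  induction u generalizing q with
  | nil => rfl
  | cons a u ih =>
    obtain ⟨x, σ⟩ := a
    simp only [List.cons_append, run]
    cases P.delta q x σ with
    | none => rfl
    | some q' => exact ih q'

theorem run_singleton (P : OpenDES Q Sp Sx Sy) (q : Q) (x : Sx) (σ : Sp) :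
    P.run q [(x, σ)] = P.delta q x σ := by
  simp only [run]
  cases P.delta q x σ <;> rfl

variable [DecidableEq Sy] (P : OpenDES Q Sp Sx Sy) (M : Mealy Qk Sx Sy)

theorem sync_run_map_fst (s : Q × Option Qk) (u : List (Sx × Sp)) :
    ((P.sync M).run s u).map Prod.fst = P.run s.1 u := by
  induction u generalizing s with
  | nil => rfl
  | cons a u ih =>
    obtain ⟨x, σ⟩ := a
    simp only [run, sync]
    cases P.delta s.1 x σ with
    | none => rfl
    | some q' => exact ih _

theorem run_of_sync_run_eq_some {s : Q × Option Qk} {u : List (Sx × Sp)} {t : Q × Option Qk}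
    (h : (P.sync M).run s u = some t) : P.run s.1 u = some t.1 := by
  rw [← sync_run_map_fst, h, Option.map_some]

theorem exists_sync_run_of_run {s : Q × Option Qk} {u : List (Sx × Sp)} {q : Q}
    (h : P.run s.1 u = some q) : ∃ t, (P.sync M).run s u = some t ∧ t.1 = q := by
  rw [← sync_run_map_fst, Option.map_eq_some_iff] at h
  exact h

theorem sync_delta_isSome (s : Q × Option Qk) (x : Sx) (σ : Sp) :
    ((P.sync M).delta s x σ).isSome = (P.delta s.1 x σ).isSome :=
  Option.isSome_map

theorem le_sync_iff {w : List (Sx × Sp × Sy)} : (P.sync M).Le w ↔ P.Le w := by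
  constructor
  · intro h
    induction h with
    | nil => exact .nil
    | snoc _ hrun hdelta hy ih =>
      exact .snoc ih (run_of_sync_run_eq_some P M hrun)
        (sync_delta_isSome P M _ _ _ ▸ hdelta) hy
  · intro h
    induction h with
    | nil => exact .nil
    | snoc _ hrun hdelta hy ih =>
      obtain ⟨t, ht, rfl⟩ := exists_sync_run_of_run P M (s := (P.sync M).q0) hrun
      exact .snoc ih ht (sync_delta_isSome P M _ _ _ ▸ hdelta) hy

-- `P.Le w` makes the outputs recorded in `w` the ones `P` feeds to `A_K` in the composition.
theorem sync_run_of_le {w : List (Sx × Sp × Sy)} (h : P.Le w) :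
    (P.sync M).run (P.sync M).q0 (Pxp w) =
      (P.run P.q0 (Pxp w)).map fun q => (q, M.akRun (some M.q0) (Pxy w)) := by
  induction h with
  | nil => rfl
  | @snoc w x σ y q _ hrun hdelta hy ih =>
    obtain ⟨q', hq'⟩ := Option.isSome_iff_exists.mp hdelta
    rw [Pxp_snoc, Pxy_snoc, run_append, run_append, ih, hrun]
    simp only [Option.map_some, Option.bind_some, run_singleton, Mealy.akRun, List.foldl_append]
    simp [sync, hq', hy]

theorem mem_lem_sync_iff {w : List (Sx × Sp × Sy)} :
    w ∈ (P.sync M).Lem ↔ w ∈ P.Lem ∧ Pxy w ∈ M.LangM := by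
  simp only [Lem, Set.mem_ofPred_eq, Mealy.LangM, le_sync_iff]
  constructor
  · rintro ⟨hw, s, hs, hsm, qk, hqk, hs2⟩
    rw [sync_run_of_le P M hw, Option.map_eq_some_iff] at hs
    obtain ⟨q, hq, rfl⟩ := hs
    exact ⟨⟨hw, q, hq, hsm⟩, qk, M.akRun_eq_some_iff.mp hs2, hqk⟩
  · rintro ⟨⟨hw, q, hq, hqm⟩, qk, hpath, hqk⟩
    refine ⟨hw, (q, some qk), ?_, hqm, qk, hqk, rfl⟩
    rw [sync_run_of_le P M hw, hq, M.akRun_eq_some_iff.mpr hpath]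
    rfl

theorem liom_sync : (P.sync M).Liom = P.Liom ∩ M.LangM := by
  have hLem : (P.sync M).Lem = P.Lem ∩ Pxy ⁻¹' M.LangM := Set.ext fun _ => mem_lem_sync_iff P M
  rw [Liom, hLem, Set.image_inter_preimage]
  rfl

end OpenDES

theorem sync_marked_io_language_eq_spec_general
    {Q Sp Sx Sy Qk : Type} [DecidableEq Sy]
    (P : OpenDES Q Sp Sx Sy)
    (M : Mealy Qk Sx Sy)
    (K : Set (List (Sx × Sy))) (hMK : M.LangM = K) (hKsub : K ⊆ P.Liom) :
    (P.sync M).Liom = K := by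
  rw [OpenDES.liom_sync, hMK, Set.inter_eq_right.mpr hKsub]

/-- For the synchronous composition `P ∥ A_K` of an open DES `P`
with the completed automaton `A_K` of an input-complete Mealy transducer
realizing `K ⊆ L_{io,m}(P)`, the marked input-output language equals the
specification: `L_{io,m}(P ∥ A_K) = K`. -/
theorem sync_marked_io_language_eq_spec
    {Q Sp Sx Sy Qk : Type} [DecidableEq Sy]
    (P : OpenDES Q Sp Sx Sy) (hP : P.InputEnabled)
    (M : Mealy Qk Sx Sy) (hM : M.InputComplete)
    (K : Set (List (Sx × Sy))) (hMK : M.LangM = K) (hKsub : K ⊆ P.Liom) :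
    (P.sync M).Liom = K :=
  sync_marked_io_language_eq_spec_general P M K hMK hKsub
end
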